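/- arXiv:2512.13244 — 6 statements merged into one kernel-verified Lean document; each statement's English description precedes it below -/
import Mathlib

section
/- Let a be an assignment satisfying both weak ordered envy-freeness and equality. If players i and j have w i = w j but a i ≠ a j, then every player k assigned to resource a i or to resource a j has weight equal to w j. -/
theorem stmt_9 {n m : ℕ} (w : Fin n → ℤ) (a : Fin n → Fin m)
    (hw : ∀ i, 0 < w i)
    (v : Fin m → ℤ)
    (hv : ∀ x, v x = ∑ i ∈ Finset.univ.filter (fun i => a i = x), w i)
    (hWOE : ∀ i j, w i < w j → a i ≠ a j → v (a i) - w i ≤ v (a j) - w j)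
    (hEq : ∀ i j, w i = w j → v (a i) = v (a j))
    (i j : Fin n) (hij : w i = w j) (haij : a i ≠ a j) :
    ∀ k, (a k = a i ∨ a k = a j) → w k = w j := by
  intro k hk
  by_contra hne
  have hvij := hEq i j hij
  rcases hk with h | h
  · rcases lt_or_gt_of_ne hne with hlt | hgt
    · have := hWOE k j hlt (by rw [h]; exact haij)
      rw [h] at this; linarith
    · have := hWOE j k hgt (by rw [h]; exact fun e => haij e.symm)
      rw [h] at this; linarith
  · rcases lt_or_gt_of_ne hne with hlt | hgt
    · have := hWOE k i (by linarith) (by rw [h]; exact fun e => haij e.symm)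
      rw [h] at this; linarith
    · have := hWOE i k (by linarith) (by rw [h]; exact haij)
      rw [h] at this; linarith
end

section
/- Let W be a positive integer, m ≥ 2, and let W[1:k] denote a strictly increasing sequence of partial sums of positive weights (i.e., W[1:k] = w_1 + ... + w_k with each w_i > 0). Then at most one positive integer k can satisfy W[1:k-1] ≤ (W - W[1:k])/(m-1) ≤ W[1:k]. -/
theorem stmt_10 {n m : ℕ} (hm : 2 ≤ m) (w : ℕ → ℤ) (hw : ∀ i < n, 0 < w i)
    (W : ℤ) (hW : W = ∑ i ∈ Finset.range n, w i)
    (P : ℕ → ℤ) (hP : ∀ k, P k = ∑ i ∈ Finset.range k, w i)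
    (k k' : ℕ) (hk1 : 1 ≤ k) (hkn : k ≤ n) (hk'1 : 1 ≤ k') (hk'n : k' ≤ n)
    (h1 : ((m : ℤ) - 1) * P (k - 1) ≤ W - P k ∧ W - P k ≤ ((m : ℤ) - 1) * P k)
    (h2 : ((m : ℤ) - 1) * P (k' - 1) ≤ W - P k' ∧ W - P k' ≤ ((m : ℤ) - 1) * P k') :
    k = k' := by
  have hm1 : (0:ℤ) ≤ (m:ℤ) - 1 := by
    have : (2:ℤ) ≤ (m:ℤ) := by exact_mod_cast hm
    linarith
  have mono : ∀ a b : ℕ, a ≤ b → b ≤ n → P a ≤ P b := by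
    intro a b hab hbn
    rw [hP, hP, ← Finset.sum_range_add_sum_Ico w hab]
    have : 0 ≤ ∑ i ∈ Finset.Ico a b, w i := by
      apply Finset.sum_nonneg
      intro i hi
      exact le_of_lt (hw i (lt_of_lt_of_le (Finset.mem_Ico.mp hi).2 hbn))
    linarith
  have smono : ∀ a b : ℕ, a < b → b ≤ n → P a < P b := by
    intro a b hab hbn
    rw [hP, hP, ← Finset.sum_range_add_sum_Ico w (le_of_lt hab)]
    have : 0 < ∑ i ∈ Finset.Ico a b, w i := by
      apply Finset.sum_pos
      · intro i hi
        exact hw i (lt_of_lt_of_le (Finset.mem_Ico.mp hi).2 hbn)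
      · exact ⟨a, Finset.mem_Ico.mpr ⟨le_refl a, hab⟩⟩
    linarith
  by_contra hne
  rcases lt_or_gt_of_ne hne with h | h
  · -- k < k'
    have h1r := h1.2
    have h2l := h2.1
    have hle : P k ≤ P (k' - 1) := mono k (k' - 1) (by omega) (by omega)
    have hlt : P k < P k' := smono k k' h hk'n
    have := mul_le_mul_of_nonneg_left hle hm1
    linarith
  · have h2r := h2.2
    have h1l := h1.1
    have hle : P k' ≤ P (k - 1) := mono k' (k - 1) (by omega) (by omega)
    have hlt : P k' < P k := smono k' k h hkn
    have := mul_le_mul_of_nonneg_left hle hm1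
    linarith
end

section
/- Consider the two-resource instance with weights w = (s_1, ..., s_n, S+1, S+1) where s_i are positive integers and S = ∑ s_i, and m = 2. There exists an assignment satisfying equality and credibility if and only if the multiset {s_1, ..., s_n} can be partitioned into two parts of equal sum. -/
/-- Load of resource `x` under assignment `a`. -/
def load {α : Type} [Fintype α] [DecidableEq α] (w : α → ℤ) (a : α → Fin 2) (x : Fin 2) : ℤ :=
  ∑ i ∈ Finset.univ.filter (fun i => a i = x), w i

lemma fin2_cases (x y z : Fin 2) (h : x ≠ y) : z = x ∨ z = y := by
  fin_cases x <;> fin_cases y <;> fin_cases z <;> simp_all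

lemma fin2_ne (x y z : Fin 2) (h : x ≠ y) : (¬ z = x) ↔ z = y := by
  fin_cases x <;> fin_cases y <;> fin_cases z <;> simp_all

lemma load_eq {n : ℕ} (w : Fin n ⊕ Fin 2 → ℤ) (a : Fin n ⊕ Fin 2 → Fin 2) (x : Fin 2) :
    load w a x = (∑ i : Fin n, if a (Sum.inl i) = x then w (Sum.inl i) else 0)
      + ∑ j : Fin 2, if a (Sum.inr j) = x then w (Sum.inr j) else 0 := by
  rw [load, Finset.sum_filter, Fintype.sum_sum_type]

theorem stmt_12 {n : ℕ} (s : Fin n → ℤ) (hs : ∀ i, 0 < s i)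
    (S : ℤ) (hS : S = ∑ i, s i)
    (w : Fin n ⊕ Fin 2 → ℤ)
    (hw1 : ∀ i : Fin n, w (Sum.inl i) = s i)
    (hw2 : ∀ j : Fin 2, w (Sum.inr j) = S + 1) :
    (∃ a : Fin n ⊕ Fin 2 → Fin 2,
        (∀ i j, w i = w j → load w a (a i) = load w a (a j)) ∧
        (∀ i x, load w a (a i) ≤ load w a x + w i)) ↔
      (∃ T : Finset (Fin n), ∑ i ∈ T, s i = ∑ i ∈ Tᶜ, s i) := by
  have hSnn : 0 ≤ S := hS ▸ Finset.sum_nonneg fun i _ => (hs i).le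
  constructor
  · rintro ⟨a, hEq, hCr⟩
    set f : Fin 2 → ℤ := fun x => ∑ i : Fin n, if a (Sum.inl i) = x then s i else 0 with hf
    have key : ∀ x, load w a x
        = f x + ∑ j : Fin 2, if a (Sum.inr j) = x then S + 1 else 0 := by
      intro x
      rw [load_eq, hf]
      congr 1
      · exact Finset.sum_congr rfl fun i _ => by rw [hw1]
      · exact Finset.sum_congr rfl fun j _ => by rw [hw2]
    have hfnn : ∀ x, 0 ≤ f x := by
      intro x
      exact Finset.sum_nonneg fun i _ => by split <;> [exact (hs i).le; rfl]
    have hfsum : ∀ x y : Fin 2, x ≠ y → f x + f y = S := by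
      intro x y hxy
      rw [hS, hf, ← Finset.sum_add_distrib]
      refine Finset.sum_congr rfl fun i _ => ?_
      rcases fin2_cases x y (a (Sum.inl i)) hxy with h | h <;>
        simp [h, hxy, Ne.symm hxy]
    by_cases hsame : a (Sum.inr 0) = a (Sum.inr 1)
    · exfalso
      obtain ⟨y, hy⟩ := exists_ne (a (Sum.inr 0))
      have h1 : load w a (a (Sum.inr 0)) = f (a (Sum.inr 0)) + ((S + 1) + (S + 1)) := by
        rw [key, Fin.sum_univ_two, if_pos rfl, ← hsame, if_pos rfl]
      have h2 : load w a y = f y := by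
        rw [key, Fin.sum_univ_two, if_neg (fun h => hy h.symm),
          if_neg (fun h => hy (hsame.trans h).symm)]
        ring
      have hc := hCr (Sum.inr 0) y
      rw [h1, h2, hw2] at hc
      have hsum := hfsum (a (Sum.inr 0)) y (Ne.symm hy)
      have := hfnn (a (Sum.inr 0))
      linarith
    · have heq := hEq (Sum.inr 0) (Sum.inr 1) (by rw [hw2, hw2])
      have h0 : load w a (a (Sum.inr 0)) = f (a (Sum.inr 0)) + (S + 1) := by
        rw [key, Fin.sum_univ_two, if_pos rfl, if_neg (fun h => hsame h.symm)]
        ring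
      have h1 : load w a (a (Sum.inr 1)) = f (a (Sum.inr 1)) + (S + 1) := by
        rw [key, Fin.sum_univ_two, if_neg hsame, if_pos rfl]
        ring
      rw [h0, h1] at heq
      have hff : f (a (Sum.inr 0)) = f (a (Sum.inr 1)) := by linarith
      refine ⟨Finset.univ.filter (fun i => a (Sum.inl i) = a (Sum.inr 0)), ?_⟩
      have hT : ∑ i ∈ Finset.univ.filter (fun i => a (Sum.inl i) = a (Sum.inr 0)), s i
          = f (a (Sum.inr 0)) := by
        rw [hf, Finset.sum_filter]
      have hTc : ∑ i ∈ (Finset.univ.filter (fun i => a (Sum.inl i) = a (Sum.inr 0)))ᶜ, s i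
          = f (a (Sum.inr 1)) := by
        rw [Finset.compl_filter, Finset.sum_filter, hf]
        exact Finset.sum_congr rfl fun i _ => by
          rw [if_congr (fin2_ne _ _ _ hsame) rfl rfl]
      rw [hT, hTc, hff]
  · rintro ⟨T, hT⟩
    refine ⟨Sum.elim (fun i => if i ∈ T then 0 else 1) (fun j => j), ?_, ?_⟩
    all_goals {
      set a : Fin n ⊕ Fin 2 → Fin 2 :=
        Sum.elim (fun i => if i ∈ T then 0 else 1) (fun j => j) with ha
      have h0 : load w a 0 = (∑ i ∈ T, s i) + (S + 1) := by
        rw [load_eq, Fin.sum_univ_two]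
        have : (∑ i : Fin n, if a (Sum.inl i) = 0 then w (Sum.inl i) else 0)
            = ∑ i ∈ T, s i := by
          rw [show (∑ i : Fin n, if a (Sum.inl i) = 0 then w (Sum.inl i) else 0)
              = ∑ i : Fin n, if i ∈ T then s i else 0 from
            Finset.sum_congr rfl fun i _ => by
              by_cases h : i ∈ T <;> simp [ha, h, hw1]]
          rw [Finset.sum_ite_mem, Finset.univ_inter]
        rw [this]
        simp [ha, hw2]
      have h1 : load w a 1 = (∑ i ∈ Tᶜ, s i) + (S + 1) := by
        rw [load_eq, Fin.sum_univ_two]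
        have : (∑ i : Fin n, if a (Sum.inl i) = 1 then w (Sum.inl i) else 0)
            = ∑ i ∈ Tᶜ, s i := by
          rw [show (∑ i : Fin n, if a (Sum.inl i) = 1 then w (Sum.inl i) else 0)
              = ∑ i : Fin n, if i ∈ Tᶜ then s i else 0 from
            Finset.sum_congr rfl fun i _ => by
              by_cases h : i ∈ T <;> simp [ha, h, hw1]]
          rw [Finset.sum_ite_mem, Finset.univ_inter]
        rw [this]
        simp [ha, hw2]
      have hall : ∀ x : Fin 2, load w a x = load w a 0 := by
        intro x
        rcases fin2_cases 0 1 x (by decide) with h | h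
        · rw [h]
        · rw [h, h0, h1, hT]
      first
      | { intro i j _
          rw [hall (a i), hall (a j)] }
      | { intro i x
          rw [hall (a i), hall x]
          have hwpos : 0 < w i := by
            cases i with
            | inl i => rw [hw1]; exact hs i
            | inr j => rw [hw2]; linarith
          linarith }
    }
end

section
/- Consider the two-resource instance with weights w = (s_1, ..., s_n, S+1, S+1) where S = ∑ s_i, and m = 2. There exists an assignment satisfying weak monotonicity and credibility if and only if {s_1, ..., s_n} admits a partition into two parts of equal sum. -/
/-!
The two heavy players must sit on different resources: if they shared one, either of them
could move to the other resource, whose load is at most `S`, and strictly gain. So each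
resource carries exactly one heavy player, and weak monotonicity forbids a light player from
sitting on the resource with the larger light load, because that player is lighter than the
heavy player on the other resource. Hence the light players split into two parts of equal sum.
Conversely, such a split with one heavy player added to each side balances the two loads, and
an assignment with balanced loads is trivially weakly monotone and credible.
-/

section Load

variable {α β γ : Type} [Fintype α] [DecidableEq α] [Fintype β] [DecidableEq β]
  [Fintype γ] [DecidableEq γ]

def IsWeaklyMonotone (w : α → ℤ) (a : α → Fin 2) : Prop :=
  ∀ i j, w i < w j → load w a (a i) ≤ load w a (a j)

def IsCredible (w : α → ℤ) (a : α → Fin 2) : Prop :=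
  ∀ i x, load w a (a i) ≤ load w a x + w i

lemma load_eq_sum_ite (w : α → ℤ) (a : α → Fin 2) (x : Fin 2) :
    load w a x = ∑ i, if a i = x then w i else 0 :=
  Finset.sum_filter _ _

lemma load_nonneg {w : α → ℤ} (hw : ∀ i, 0 ≤ w i) (a : α → Fin 2) (x : Fin 2) :
    0 ≤ load w a x :=
  Finset.sum_nonneg fun i _ => hw i

lemma load_le_sum {w : α → ℤ} (hw : ∀ i, 0 ≤ w i) (a : α → Fin 2) (x : Fin 2) :
    load w a x ≤ ∑ i, w i :=
  Finset.sum_le_sum_of_subset_of_nonneg (Finset.filter_subset _ _) fun i _ _ => hw i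

lemma exists_eq_of_load_ne_zero {w : α → ℤ} {a : α → Fin 2} {x : Fin 2} (h : load w a x ≠ 0) :
    ∃ i, a i = x := by
  obtain ⟨i, hi, -⟩ := Finset.exists_ne_zero_of_sum_ne_zero h
  exact ⟨i, (Finset.mem_filter.mp hi).2⟩

lemma load_one_eq_sum_compl (w : α → ℤ) (a : α → Fin 2) :
    load w a 1 = ∑ i ∈ (Finset.univ.filter fun i => a i = 0)ᶜ, w i := by
  rw [load, Finset.compl_filter]
  congr 1
  exact Finset.filter_congr fun i _ => by omega

lemma load_sumElim (u : β → ℤ) (v : γ → ℤ) (b : β → Fin 2) (c : γ → Fin 2) (x : Fin 2) :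
    load (Sum.elim u v) (Sum.elim b c) x = load u b x + load v c x := by
  simp only [load_eq_sum_ite]
  exact Fintype.sum_sum_type _

lemma load_const_of_bijective {c : γ → Fin 2} (hc : c.Bijective) (h : ℤ) (x : Fin 2) :
    load (fun _ => h) c x = h := by
  rw [load_eq_sum_ite, hc.sum_comp fun y => if y = x then h else 0, Finset.sum_ite_eq']
  simp

lemma load_const_self (w : α → ℤ) (x : Fin 2) : load w (fun _ => x) x = ∑ i, w i := by
  simp [load]

lemma load_const_of_ne (w : α → ℤ) {x y : Fin 2} (hxy : y ≠ x) : load w (fun _ => x) y = 0 := by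
  simp [load, Ne.symm hxy]

lemma isWeaklyMonotone_of_load_eq {w : α → ℤ} {a : α → Fin 2} (h : load w a 0 = load w a 1) :
    IsWeaklyMonotone w a := by
  intro i j _
  rcases Fin.exists_fin_two.mp ⟨a i, rfl⟩ with hi | hi <;>
    rcases Fin.exists_fin_two.mp ⟨a j, rfl⟩ with hj | hj <;> simp [hi, hj, h]

lemma isCredible_of_load_eq {w : α → ℤ} (hw : ∀ i, 0 ≤ w i) {a : α → Fin 2}
    (h : load w a 0 = load w a 1) : IsCredible w a := by
  intro i x
  have := hw i
  rcases Fin.exists_fin_two.mp ⟨a i, rfl⟩ with hi | hi <;>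
    rcases Fin.exists_fin_two.mp ⟨x, rfl⟩ with hx | hx <;> simp only [hi, hx] <;> omega

lemma exists_load_eq_iff_exists_sum_eq_sum_compl (w : α → ℤ) :
    (∃ a : α → Fin 2, load w a 0 = load w a 1) ↔
      ∃ T : Finset α, ∑ i ∈ T, w i = ∑ i ∈ Tᶜ, w i := by
  constructor
  · rintro ⟨a, ha⟩
    exact ⟨Finset.univ.filter fun i => a i = 0, by rwa [← load_one_eq_sum_compl]⟩
  · rintro ⟨T, hT⟩
    refine ⟨fun i => if i ∈ T then 0 else 1, ?_⟩
    rw [load_one_eq_sum_compl]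
    simpa [load] using hT

end Load

section TwoHeavyPlayers

variable {β : Type} [Fintype β] [DecidableEq β] {s : β → ℤ} {h : ℤ}

lemma injective_of_isCredible (hs : ∀ i, 0 ≤ s i) (hh : ∑ i, s i < h) {b : β → Fin 2}
    {c : Fin 2 → Fin 2} (hcred : IsCredible (Sum.elim s fun _ => h) (Sum.elim b c)) :
    c.Injective := by
  have hc : c 0 ≠ c 1 := by
    intro hc
    obtain ⟨x, rfl⟩ : ∃ x, c = fun _ => x := ⟨c 0, funext fun k => by fin_cases k <;> simp [hc]⟩
    obtain ⟨y, hy⟩ := exists_ne x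
    have hcred := hcred (Sum.inr 0) y
    simp only [Sum.elim_inr, load_sumElim, load_const_self, load_const_of_ne _ hy,
      Fin.sum_univ_two] at hcred
    have := load_nonneg hs b x
    have := load_le_sum hs b y
    omega
  intro i j hij
  fin_cases i <;> fin_cases j <;> simp_all [Ne.symm hc]

lemma load_eq_of_isWeaklyMonotone (hs : ∀ i, 0 ≤ s i) (hh : ∑ i, s i < h) {b : β → Fin 2}
    {c : Fin 2 → Fin 2} (hc : c.Bijective)
    (hmono : IsWeaklyMonotone (Sum.elim s fun _ => h) (Sum.elim b c)) :
    load s b 0 = load s b 1 := by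
  have hload : ∀ x, load (Sum.elim s fun _ => h) (Sum.elim b c) x = load s b x + h := fun x => by
    rw [load_sumElim, load_const_of_bijective hc]
  have hle : ∀ x y, load s b y ≤ load s b x := by
    intro x y
    by_contra! hlt
    obtain ⟨i, hi⟩ := exists_eq_of_load_ne_zero ((load_nonneg hs b x).trans_lt hlt).ne'
    obtain ⟨j, hj⟩ := hc.surjective x
    have hij : s i < h := (Finset.single_le_sum (fun i _ => hs i) (Finset.mem_univ i)).trans_lt hh
    have := hmono (Sum.inl i) (Sum.inr j) hij
    simp only [Sum.elim_inl, Sum.elim_inr, hi, hj, hload] at this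
    omega
  exact le_antisymm (hle 1 0) (hle 0 1)

theorem exists_isWeaklyMonotone_isCredible_iff (hs : ∀ i, 0 ≤ s i) (hh : ∑ i, s i < h) :
    (∃ a, IsWeaklyMonotone (Sum.elim s fun _ : Fin 2 => h) a ∧
        IsCredible (Sum.elim s fun _ : Fin 2 => h) a) ↔
      ∃ b : β → Fin 2, load s b 0 = load s b 1 := by
  constructor
  · rintro ⟨a, hmono, hcred⟩
    rw [← Sum.elim_comp_inl_inr a] at hmono hcred
    have hc := Finite.injective_iff_bijective.mp (injective_of_isCredible hs hh hcred)
    exact ⟨_, load_eq_of_isWeaklyMonotone hs hh hc hmono⟩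
  · rintro ⟨b, hb⟩
    have hload : load (Sum.elim s fun _ => h) (Sum.elim b id) 0 =
        load (Sum.elim s fun _ => h) (Sum.elim b id) 1 := by
      simp only [load_sumElim, load_const_of_bijective Function.bijective_id, hb]
    have hh0 : 0 ≤ h := (Finset.sum_nonneg fun i _ => hs i).trans hh.le
    refine ⟨_, isWeaklyMonotone_of_load_eq hload, isCredible_of_load_eq ?_ hload⟩
    rintro (i | j)
    exacts [hs i, hh0]

end TwoHeavyPlayers

theorem stmt_13 {n : ℕ} (s : Fin n → ℤ) (hs : ∀ i, 0 < s i)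
    (S : ℤ) (hS : S = ∑ i, s i)
    (w : Fin n ⊕ Fin 2 → ℤ)
    (hw1 : ∀ i : Fin n, w (Sum.inl i) = s i)
    (hw2 : ∀ j : Fin 2, w (Sum.inr j) = S + 1) :
    (∃ a : Fin n ⊕ Fin 2 → Fin 2,
        (∀ i j, w i < w j → load w a (a i) ≤ load w a (a j)) ∧
        (∀ i x, load w a (a i) ≤ load w a x + w i)) ↔
      (∃ T : Finset (Fin n), ∑ i ∈ T, s i = ∑ i ∈ Tᶜ, s i) := by
  obtain rfl : w = Sum.elim s fun _ => S + 1 := funext fun i => i.rec hw1 hw2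
  rw [← exists_load_eq_iff_exists_sum_eq_sum_compl]
  exact exists_isWeaklyMonotone_isCredible_iff (fun i => (hs i).le) (by omega)
end

section
/- In the two-resource instance with weights (s_1, ..., s_n, S+1, S+1), S = ∑ s_i, m = 2: in any credible assignment, the two players of weight S+1 are assigned to different resources. -/
lemma load_total {α : Type} [Fintype α] [DecidableEq α] (w : α → ℤ) (a : α → Fin 2)
    (x y : Fin 2) (hxy : x ≠ y) :
    load w a x + load w a y = ∑ i, w i := by
  unfold load
  rw [← Finset.sum_filter_add_sum_filter_not Finset.univ (fun i => a i = x) w]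
  congr 1
  apply Finset.sum_congr _ (fun _ _ => rfl)
  apply Finset.filter_congr
  intro i _
  simp only [eq_iff_iff, Fin.ext_iff] at *
  omega

theorem stmt_15 {n : ℕ} (s : Fin n → ℤ) (hs : ∀ i, 0 < s i)
    (S : ℤ) (hS : S = ∑ i, s i)
    (w : Fin n ⊕ Fin 2 → ℤ)
    (hw1 : ∀ i : Fin n, w (Sum.inl i) = s i)
    (hw2 : ∀ j : Fin 2, w (Sum.inr j) = S + 1)
    (a : Fin n ⊕ Fin 2 → Fin 2)
    (hCr : ∀ i x, load w a (a i) ≤ load w a x + w i) :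
    a (Sum.inr 0) ≠ a (Sum.inr 1) := by
  intro h
  set x : Fin 2 := a (Sum.inr 0) with hx
  obtain ⟨y, hyx⟩ := exists_ne x
  -- total sum of weights
  have htot : ∑ i, w i = 3 * S + 2 := by
    rw [Fintype.sum_sum_type]
    simp only [hw1, hw2]
    rw [← hS, Fin.sum_univ_two]
    ring
  -- load x ≥ 2S + 2
  have hsub : ({Sum.inr 0, Sum.inr 1} : Finset (Fin n ⊕ Fin 2)) ⊆
      Finset.univ.filter (fun i => a i = x) := by
    intro i hi
    simp only [Finset.mem_insert, Finset.mem_singleton] at hi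
    rcases hi with rfl | rfl <;> simp [Finset.mem_filter, hx, ← h]
  have hlx : 2 * S + 2 ≤ load w a x := by
    have h1 : ∑ i ∈ ({Sum.inr 0, Sum.inr 1} : Finset (Fin n ⊕ Fin 2)), w i = 2 * S + 2 := by
      rw [Finset.sum_pair (by simp)]
      simp [hw2]; ring
    rw [← h1]
    apply Finset.sum_le_sum_of_subset_of_nonneg hsub
    intro i _ _
    rcases i with i | j
    · rw [hw1]; exact (hs i).le
    · rw [hw2]
      have : 0 ≤ S := by
        rw [hS]; exact Finset.sum_nonneg (fun i _ => (hs i).le)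
      omega
  have hsum : load w a x + load w a y = 3 * S + 2 := by
    rw [load_total w a x y (Ne.symm hyx), htot]
  have hc := hCr (Sum.inr 0) y
  rw [← hx, hw2] at hc
  omega
end

section
/- Let a be a contiguous assignment in canonical ordering with resources 1..m, where loads are non-increasing (v 1 ≥ v 2 ≥ ... ≥ v m) and player weights are non-increasing along resources. If for each pair of adjacent resources x, x+1 the WOE condition holds between their players (v(x+1) − min-weight-on-(x+1) ≤ v(x) − max-weight-on-x), then WOE holds globally between all pairs of players on distinct resources. -/
theorem stmt_18 {n m : ℕ} (w : Fin n → ℤ) (a : Fin n → ℕ)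
    (hw : ∀ i, 0 < w i)
    (ha : ∀ i, 1 ≤ a i ∧ a i ≤ m)
    (hmono_w : ∀ i j : Fin n, i < j → w j ≤ w i)
    (hmono_a : ∀ i j : Fin n, i < j → a i ≤ a j)
    (v : ℕ → ℤ)
    (hv : ∀ x, v x = ∑ i ∈ Finset.univ.filter (fun i => a i = x), w i)
    (hload : ∀ x, 1 ≤ x → x < m → v (x + 1) ≤ v x)
    (M μ : ℕ → ℤ)
    (hM1 : ∀ i, w i ≤ M (a i))
    (hM2 : ∀ x, 1 ≤ x → x ≤ m → ∃ i, a i = x ∧ w i = M x)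
    (hμ1 : ∀ i, μ (a i) ≤ w i)
    (hμ2 : ∀ x, 1 ≤ x → x ≤ m → ∃ i, a i = x ∧ w i = μ x)
    (hadj : ∀ x, 1 ≤ x → x < m → v (x + 1) - μ (x + 1) ≤ v x - M x) :
    ∀ i j, w i < w j → a i ≠ a j → v (a i) - w i ≤ v (a j) - w j := by
  intro i j hwij hane
  -- j < i
  have hji : j < i := by
    rcases lt_trichotomy i j with h | h | h
    · exact absurd (hmono_w i j h) (by linarith)
    · exact absurd h (by intro h; rw [h] at hwij; exact lt_irrefl _ hwij)
    · exact h
  have haji : a j < a i := lt_of_le_of_ne (hmono_a j i hji) (fun h => hane h.symm)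
  have hμM : ∀ x, 1 ≤ x → x ≤ m → μ x ≤ M x := by
    intro x h1 h2
    obtain ⟨k, hk1, hk2⟩ := hM2 x h1 h2
    have := hμ1 k
    rw [hk1, hk2] at this
    exact this
  have key : ∀ y, a j < y → y ≤ m → v y - μ y ≤ v (a j) - M (a j) := by
    intro y
    induction y with
    | zero => intro h; omega
    | succ y ih =>
      intro hxy hym
      rcases Nat.lt_or_ge (a j) y with h | h
      · have h1 := ih h (by omega)
        have h2 := hadj y (by have := (ha j).1; omega) (by omega)
        have h3 := hμM y (by have := (ha j).1; omega) (by omega)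
        linarith
      · have hxe : a j = y := by omega
        rw [← hxe]
        exact hadj (a j) (ha j).1 (by omega)
  have h1 := key (a i) haji (ha i).2
  have h2 := hμ1 i
  have h3 := hM1 j
  linarith
end
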